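/- arXiv:2312.17701 — 6 statements merged into one kernel-verified Lean document; each statement's English description precedes it below -/
import Mathlib

section
/- For all real $x > 0$ and $s \in (0,1)$, the Gamma function satisfies $\Gamma(x+s) \leq x^s \, \Gamma(x)$. -/
lemma Real.Gamma_rpow_mul_Gamma_add_one_rpow {x : ℝ} (hx : 0 < x) (s : ℝ) :
    Real.Gamma x ^ (1 - s) * Real.Gamma (x + 1) ^ s = x ^ s * Real.Gamma x := by
  have hG : 0 < Real.Gamma x := Real.Gamma_pos_of_pos hx
  rw [Real.Gamma_add_one hx.ne', Real.mul_rpow hx.le hG.le, mul_left_comm, ← Real.rpow_add hG,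
    sub_add_cancel, Real.rpow_one]

theorem gamma_add_le (x s : ℝ) (hx : 0 < x) (hs0 : 0 < s) (hs1 : s < 1) :
    Real.Gamma (x + s) ≤ x ^ s * Real.Gamma x :=
  calc Real.Gamma (x + s) = Real.Gamma ((1 - s) * x + s * (x + 1)) := by ring_nf
    _ ≤ Real.Gamma x ^ (1 - s) * Real.Gamma (x + 1) ^ s :=
      Real.Gamma_mul_add_mul_le_rpow_Gamma_mul_rpow_Gamma hx (by linarith) (by linarith) hs0
        (by ring)
    _ = x ^ s * Real.Gamma x := Real.Gamma_rpow_mul_Gamma_add_one_rpow hx s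
end

section
/- For all real $x > 0$, we have $x\,\Gamma(x) \geq 0.885$, i.e. $\Gamma(x+1) \geq 0.885$. -/
/-!
By Euler's product, `log Γ x` is the limit of `logGammaSeq x m`, whose increments
`x log (1 + 1/m) - log (1 + x/(m + 1))` are `(x + x²)/(2m²) + O(1/m³)`. Expanding `log (1 + u)` to
third order traps them between consecutive differences of `(x + x²)/(2m)` and of
`(x + x²)/(2(m + 1))`, so for `0 < x ≤ 1` and `n ≥ 64` the tail `log Γ x - logGammaSeq x n` lies
between `(x + x²)/(2(n + 1))` and `(x + x²)/(2n)`. For `n = 64` this brackets `Γ (1 + p/64)` within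
`10⁻⁴` by exact rational arithmetic at `p = 28, …, 31`, around the minimum `≈ 0.88560` of `Γ` near
`1.4616`. A convex function lies above each of its secants outside the secant's interval, and five
secants through neighbouring grid points cover all of `(0, ∞)`.
-/

open Real Filter Topology Set BohrMollerup
open scoped Nat

noncomputable def cubicLogTaylor (u : ℝ) : ℝ := u - u ^ 2 / 2 + u ^ 3 / 3

theorem abs_log_one_add_sub_cubicLogTaylor_le {u : ℝ} (h0 : 0 ≤ u) (h1 : u ≤ 1 / 2) :
    |log (1 + u) - cubicLogTaylor u| ≤ 2 * u ^ 4 := by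
  have hu : |-u| = u := by rw [abs_neg, abs_of_nonneg h0]
  have h := abs_log_sub_add_sum_range_le (x := -u) (by rw [hu]; linarith) 3
  norm_num [Finset.sum_range_succ, hu] at h
  calc |log (1 + u) - cubicLogTaylor u|
      = |-u + u ^ 2 / 2 + (-u) ^ 3 / 3 + log (1 + u)| := by rw [cubicLogTaylor]; ring_nf
    _ ≤ u ^ 4 / (1 - u) := h
    _ ≤ 2 * u ^ 4 := by
      rw [div_le_iff₀ (by linarith)]
      nlinarith [pow_nonneg h0 4]

theorem quartic_nonneg_of_coeffs {x a b c d : ℝ} (hx0 : 0 ≤ x) (hx1 : x ≤ 1) (ha : 0 ≤ a)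
    (hc : 0 ≤ c) (hd : 0 ≤ d) (hb : c + d ≤ b) :
    0 ≤ x * a + x ^ 2 * b - x ^ 3 * c - x ^ 4 * d := by
  have h3 : x ^ 3 ≤ x ^ 2 := pow_le_pow_of_le_one hx0 hx1 (by norm_num)
  have h4 : x ^ 4 ≤ x ^ 2 := pow_le_pow_of_le_one hx0 hx1 (by norm_num)
  nlinarith [mul_nonneg hx0 ha, mul_le_mul_of_nonneg_right h3 hc,
    mul_le_mul_of_nonneg_right h4 hd, mul_le_mul_of_nonneg_left hb (sq_nonneg x)]

section TaylorIncrement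

variable {M x : ℝ}

theorem sub_div_le_taylor_increment (hM : 64 ≤ M) (hx0 : 0 ≤ x) (hx1 : x ≤ 1) :
    (x + x ^ 2) / 2 / (M + 1) - (x + x ^ 2) / 2 / (M + 2) ≤
      x * (cubicLogTaylor (1 / M) - 2 * (1 / M) ^ 4)
        - (cubicLogTaylor (x / (M + 1)) + 2 * (x / (M + 1)) ^ 4) := by
  have hM0 : 0 < M := by linarith
  have ha : 0 ≤ cubicLogTaylor (1 / M) - 2 * (1 / M) ^ 4 - 1 / (M + 1)
      - 1 / (2 * ((M + 1) * (M + 2))) := by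
    rw [cubicLogTaylor, sub_nonneg]
    field_simp
    nlinarith [pow_pos hM0 3, pow_pos hM0 4, pow_pos hM0 5,
      mul_nonneg (sub_nonneg.2 hM) (pow_pos hM0 5).le]
  have hb : 1 / (3 * (M + 1) ^ 3) + 2 / (M + 1) ^ 4 ≤
      1 / (2 * (M + 1) ^ 2) - 1 / (2 * ((M + 1) * (M + 2))) := by
    field_simp
    nlinarith [pow_pos hM0 5, mul_nonneg (sub_nonneg.2 hM) (pow_pos hM0 5).le]
  rw [← sub_nonneg]
  refine (quartic_nonneg_of_coeffs hx0 hx1 ha (by positivity) (by positivity) hb).trans_eq ?_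
  rw [cubicLogTaylor, cubicLogTaylor]
  field_simp
  ring

theorem taylor_increment_le_sub_div (hM : 64 ≤ M) (hx0 : 0 ≤ x) (hx1 : x ≤ 1) :
    x * (cubicLogTaylor (1 / M) + 2 * (1 / M) ^ 4)
        - (cubicLogTaylor (x / (M + 1)) - 2 * (x / (M + 1)) ^ 4) ≤
      (x + x ^ 2) / 2 / M - (x + x ^ 2) / 2 / (M + 1) := by
  have hM0 : 0 < M := by linarith
  have ha : 0 ≤ 1 / (2 * M * (M + 1)) + 1 / (M + 1)
      - (cubicLogTaylor (1 / M) + 2 * (1 / M) ^ 4) := by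
    rw [cubicLogTaylor, sub_nonneg]
    field_simp
    nlinarith [pow_pos hM0 5, mul_nonneg (sub_nonneg.2 hM) (pow_pos hM0 5).le]
  have hb : 0 + 2 / (M + 1) ^ 4 ≤ 1 / (2 * M * (M + 1)) - 1 / (2 * (M + 1) ^ 2) := by
    rw [zero_add]
    field_simp
    nlinarith [pow_pos hM0 3, mul_nonneg (sub_nonneg.2 hM) (pow_pos hM0 3).le]
  have hc : 0 ≤ x ^ 3 * (1 / (3 * (M + 1) ^ 3)) := by positivity
  rw [← sub_nonneg]
  refine (add_nonneg (quartic_nonneg_of_coeffs hx0 hx1 ha le_rfl (by positivity) hb) hc).trans_eq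
    ?_
  rw [cubicLogTaylor, cubicLogTaylor]
  field_simp
  ring

end TaylorIncrement

section GaussProduct

variable {x : ℝ}

theorem logGammaSeq_succ_sub (hx : 0 < x) {m : ℕ} (hm : m ≠ 0) :
    logGammaSeq x (m + 1) - logGammaSeq x m = x * log (1 + 1 / m) - log (1 + x / (m + 1)) := by
  have hm0 : (0 : ℝ) < m := by positivity
  have h1 : 1 + 1 / (m : ℝ) = (m + 1) / m := by field_simp
  have h2 : 1 + x / ((m : ℝ) + 1) = (x + (m + 1)) / (m + 1) := by field_simp; ring
  rw [h1, h2, log_div (by positivity) hm0.ne', log_div (by positivity) (by positivity)]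
  simp only [logGammaSeq, Finset.sum_range_succ, Nat.factorial_succ, Nat.cast_mul, Nat.cast_succ]
  rw [log_mul (by positivity) (by positivity)]
  ring

theorem exp_logGammaSeq (hx : 0 < x) {n : ℕ} (hn : n ≠ 0) :
    exp (logGammaSeq x n) = GammaSeq x n := by
  rw [logGammaSeq, GammaSeq, exp_sub, exp_add, exp_log (by positivity), mul_comm x,
    ← rpow_def_of_pos (by positivity), exp_sum]
  exact congrArg _ (Finset.prod_congr rfl fun j _ => exp_log (by positivity))

theorem logGammaSeq_succ_sub_ge (hx : 0 < x) (hx1 : x ≤ 1) {m : ℕ} (hm : 64 ≤ m) :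
    (x + x ^ 2) / 2 / (m + 1) - (x + x ^ 2) / 2 / (m + 2) ≤
      logGammaSeq x (m + 1) - logGammaSeq x m := by
  have hM : (64 : ℝ) ≤ m := by exact_mod_cast hm
  have hlog₁ := abs_le.1 (abs_log_one_add_sub_cubicLogTaylor_le (u := 1 / m) (by positivity)
    (by rw [div_le_iff₀ (by linarith)]; linarith))
  have hlog₂ := abs_le.1 (abs_log_one_add_sub_cubicLogTaylor_le (u := x / (m + 1))
    (by positivity) (by rw [div_le_iff₀ (by linarith)]; linarith))
  rw [logGammaSeq_succ_sub hx (by omega)]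
  nlinarith [sub_div_le_taylor_increment hM hx.le hx1]

theorem logGammaSeq_succ_sub_le (hx : 0 < x) (hx1 : x ≤ 1) {m : ℕ} (hm : 64 ≤ m) :
    logGammaSeq x (m + 1) - logGammaSeq x m ≤
      (x + x ^ 2) / 2 / m - (x + x ^ 2) / 2 / (m + 1) := by
  have hM : (64 : ℝ) ≤ m := by exact_mod_cast hm
  have hlog₁ := abs_le.1 (abs_log_one_add_sub_cubicLogTaylor_le (u := 1 / m) (by positivity)
    (by rw [div_le_iff₀ (by linarith)]; linarith))
  have hlog₂ := abs_le.1 (abs_log_one_add_sub_cubicLogTaylor_le (u := x / (m + 1))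
    (by positivity) (by rw [div_le_iff₀ (by linarith)]; linarith))
  rw [logGammaSeq_succ_sub hx (by omega)]
  nlinarith [taylor_increment_le_sub_div hM hx.le hx1]

theorem logGammaSeq_add_le_log_Gamma (hx : 0 < x) (hx1 : x ≤ 1) {n : ℕ} (hn : 64 ≤ n) :
    logGammaSeq x n + (x + x ^ 2) / 2 / (n + 1) ≤ log (Gamma x) := by
  set a : ℕ → ℝ := fun m => logGammaSeq x m + (x + x ^ 2) / 2 / (m + 1)
  have hmono : Monotone fun k => a (k + n) := monotone_nat_of_le_succ fun k => by
    have := logGammaSeq_succ_sub_ge hx hx1 (m := k + n) (by omega)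
    simp only [a, show k + 1 + n = k + n + 1 by omega]
    push_cast at this ⊢
    ring_nf at this ⊢
    linarith
  have hlim : Tendsto a atTop (𝓝 (log (Gamma x))) := by
    simpa using (tendsto_log_gamma hx).add (tendsto_const_nhds.div_atTop
      (tendsto_atTop_add_const_right _ 1 tendsto_natCast_atTop_atTop))
  simpa using hmono.ge_of_tendsto ((tendsto_add_atTop_iff_nat n).2 hlim) 0

theorem log_Gamma_le_logGammaSeq_add (hx : 0 < x) (hx1 : x ≤ 1) {n : ℕ} (hn : 64 ≤ n) :
    log (Gamma x) ≤ logGammaSeq x n + (x + x ^ 2) / 2 / n := by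
  set b : ℕ → ℝ := fun m => logGammaSeq x m + (x + x ^ 2) / 2 / m
  have hanti : Antitone fun k => b (k + n) := antitone_nat_of_succ_le fun k => by
    have := logGammaSeq_succ_sub_le hx hx1 (m := k + n) (by omega)
    simp only [b, show k + 1 + n = k + n + 1 by omega]
    push_cast at this ⊢
    ring_nf at this ⊢
    linarith
  have hlim : Tendsto b atTop (𝓝 (log (Gamma x))) := by
    simpa using (tendsto_log_gamma hx).add
      (tendsto_const_nhds.div_atTop tendsto_natCast_atTop_atTop)
  simpa using hanti.le_of_tendsto ((tendsto_add_atTop_iff_nat n).2 hlim) 0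

theorem Gamma_one_add_eq_mul_exp (hx : 0 < x) {n : ℕ} (hn : n ≠ 0) :
    Gamma (1 + x) = n ^ x * (x * n ! / ∏ j ∈ Finset.range (n + 1), (x + j)) *
      exp (log (Gamma x) - logGammaSeq x n) := by
  have hseq : 0 < GammaSeq x n := exp_logGammaSeq hx hn ▸ exp_pos _
  rw [exp_sub, exp_log (Gamma_pos_of_pos hx), exp_logGammaSeq hx hn, add_comm,
    Gamma_add_one hx.ne']
  rw [GammaSeq] at hseq ⊢
  field_simp

theorem le_Gamma_one_add {n : ℕ} {r a : ℝ} (hx : 0 < x) (hx1 : x ≤ 1) (hn : 64 ≤ n)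
    (hr : r ≤ n ^ x)
    (ha : a ≤ r * (x * n ! / ∏ j ∈ Finset.range (n + 1), (x + j)) *
      (1 + (x + x ^ 2) / 2 / (n + 1))) :
    a ≤ Gamma (1 + x) := by
  have htail := logGammaSeq_add_le_log_Gamma hx hx1 hn
  rw [Gamma_one_add_eq_mul_exp hx (n := n) (by omega)]
  refine ha.trans (mul_le_mul (mul_le_mul_of_nonneg_right hr (by positivity)) ?_
    (by positivity) (by positivity))
  linarith [add_one_le_exp ((x + x ^ 2) / 2 / (n + 1)),
    exp_le_exp.2 (le_sub_iff_add_le'.2 htail)]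

theorem Gamma_one_add_le {n : ℕ} {R b : ℝ} (hx : 0 < x) (hx1 : x ≤ 1) (hn : 64 ≤ n)
    (hR : n ^ x ≤ R)
    (hb : R * (x * n ! / ∏ j ∈ Finset.range (n + 1), (x + j)) / (1 - (x + x ^ 2) / 2 / n) ≤ b) :
    Gamma (1 + x) ≤ b := by
  have hn' : (64 : ℝ) ≤ n := by exact_mod_cast hn
  have htail := log_Gamma_le_logGammaSeq_add hx hx1 hn
  have hK : 0 ≤ x * n ! / ∏ j ∈ Finset.range (n + 1), (x + j) := by positivity
  have hc : (x + x ^ 2) / 2 / n < 1 := by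
    rw [div_lt_one (by linarith)]; nlinarith
  rw [Gamma_one_add_eq_mul_exp hx (n := n) (by omega)]
  refine le_trans ?_ hb
  rw [div_eq_mul_one_div (R * _)]
  refine mul_le_mul (mul_le_mul_of_nonneg_right hR hK) ?_ (by positivity)
    (mul_nonneg ((rpow_nonneg (by positivity) x).trans hR) hK)
  exact (exp_le_exp.2 (sub_le_iff_le_add'.2 htail)).trans
    (exp_bound_div_one_sub_of_interval (by positivity) hc)

end GaussProduct

theorem pow_rpow_natCast_div {b : ℝ} (hb : 0 ≤ b) (p : ℕ) {n : ℕ} (hn : n ≠ 0) :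
    (b ^ ((p : ℝ) / n)) ^ n = b ^ p := by
  rw [← rpow_natCast, ← rpow_mul hb, div_mul_cancel₀ _ (Nat.cast_ne_zero.2 hn), rpow_natCast]

theorem le_rpow_natCast_div_of_pow_le {b r : ℝ} (hb : 0 ≤ b) {p n : ℕ} (hn : n ≠ 0)
    (h : r ^ n ≤ b ^ p) : r ≤ b ^ ((p : ℝ) / n) := by
  rcases lt_or_ge r 0 with hr | hr
  · exact hr.le.trans (rpow_nonneg hb _)
  · exact le_of_pow_le_pow_left₀ hn (rpow_nonneg hb _) (by rwa [pow_rpow_natCast_div hb p hn])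

theorem rpow_natCast_div_le_of_le_pow {b R : ℝ} (hb : 0 ≤ b) (hR : 0 ≤ R) {p n : ℕ}
    (hn : n ≠ 0) (h : b ^ p ≤ R ^ n) : b ^ ((p : ℝ) / n) ≤ R :=
  le_of_pow_le_pow_left₀ hn hR (by rwa [pow_rpow_natCast_div hb p hn])

theorem le_Gamma_one_add_div {p n : ℕ} {r a : ℝ} (hp : 0 < p) (hpn : p ≤ n) (hn : 64 ≤ n)
    (hr : r ^ n ≤ n ^ p)
    (ha : a ≤ r * ((p / n : ℝ) * n ! / ∏ j ∈ Finset.range (n + 1), ((p / n : ℝ) + j)) *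
      (1 + ((p / n : ℝ) + (p / n : ℝ) ^ 2) / 2 / (n + 1))) :
    a ≤ Gamma (1 + p / n) :=
  le_Gamma_one_add (by positivity) (div_le_one_of_le₀ (by exact_mod_cast hpn) (by positivity)) hn
    (le_rpow_natCast_div_of_pow_le (by positivity) (by omega) hr) ha

theorem Gamma_one_add_div_le {p n : ℕ} {R b : ℝ} (hp : 0 < p) (hpn : p ≤ n) (hn : 64 ≤ n)
    (hR0 : 0 ≤ R) (hR : n ^ p ≤ R ^ n)
    (hb : R * ((p / n : ℝ) * n ! / ∏ j ∈ Finset.range (n + 1), ((p / n : ℝ) + j)) /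
      (1 - ((p / n : ℝ) + (p / n : ℝ) ^ 2) / 2 / n) ≤ b) :
    Gamma (1 + p / n) ≤ b :=
  Gamma_one_add_le (by positivity) (div_le_one_of_le₀ (by exact_mod_cast hpn) (by positivity)) hn
    (rpow_natCast_div_le_of_le_pow (by positivity) hR0 (by omega) hR) hb

theorem Gamma_one_add_28_div_64_ge : 0.8857 ≤ Gamma (1 + 28 / 64) := by
  exact_mod_cast le_Gamma_one_add_div (p := 28) (n := 64) (r := 6.16884) (by norm_num)
    (by norm_num) le_rfl (by norm_num) (by norm_num [Finset.prod_range_succ, Nat.factorial])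

theorem Gamma_one_add_29_div_64_mem : Gamma (1 + 29 / 64) ∈ Icc 0.8855 0.8857 := by
  constructor
  · exact_mod_cast le_Gamma_one_add_div (p := 29) (n := 64) (r := 6.58302) (by norm_num)
      (by norm_num) le_rfl (by norm_num) (by norm_num [Finset.prod_range_succ, Nat.factorial])
  · exact_mod_cast Gamma_one_add_div_le (p := 29) (n := 64) (R := 6.58303) (by norm_num)
      (by norm_num) le_rfl (by norm_num) (by norm_num)
      (by norm_num [Finset.prod_range_succ, Nat.factorial])

theorem Gamma_one_add_30_div_64_mem : Gamma (1 + 30 / 64) ∈ Icc 0.8855 0.8857 := by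
  constructor
  · exact_mod_cast le_Gamma_one_add_div (p := 30) (n := 64) (r := 7.025) (by norm_num)
      (by norm_num) le_rfl (by norm_num) (by norm_num [Finset.prod_range_succ, Nat.factorial])
  · exact_mod_cast Gamma_one_add_div_le (p := 30) (n := 64) (R := 7.02501) (by norm_num)
      (by norm_num) le_rfl (by norm_num) (by norm_num)
      (by norm_num [Finset.prod_range_succ, Nat.factorial])

theorem Gamma_one_add_31_div_64_mem : Gamma (1 + 31 / 64) ∈ Icc 0.8857 0.8859 := by
  constructor
  · exact_mod_cast le_Gamma_one_add_div (p := 31) (n := 64) (r := 7.49667) (by norm_num)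
      (by norm_num) le_rfl (by norm_num) (by norm_num [Finset.prod_range_succ, Nat.factorial])
  · exact_mod_cast Gamma_one_add_div_le (p := 31) (n := 64) (R := 7.49668) (by norm_num)
      (by norm_num) le_rfl (by norm_num) (by norm_num)
      (by norm_num [Finset.prod_range_succ, Nat.factorial])

theorem ConvexOn.add_mul_slope_le {f : ℝ → ℝ} {s : Set ℝ} (hf : ConvexOn ℝ s f) {q r t : ℝ}
    (hr : r ∈ s) (ht : t ∈ s) (hq : q ∈ uIcc t r) (hrq : r ≠ q) :
    f q + (t - q) * slope f q r ≤ f t := by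
  have hqs : q ∈ s := hf.1.ordConnected.uIcc_subset ht hr hq
  rcases eq_or_ne t q with rfl | htq
  · simp
  have hslope : f t = f q + (t - q) * slope f q t := by
    rw [slope_def_field]; field_simp [sub_ne_zero.2 htq]; ring
  rw [hslope]
  rcases mem_uIcc.1 hq with ⟨htq', hqr⟩ | ⟨hrq', hqt⟩
  · have hlt : t < q := lt_of_le_of_ne htq' htq
    have := hf.slope_mono hqs ⟨ht, htq⟩ ⟨hr, hrq⟩ (hlt.trans_le hqr).le
    nlinarith
  · have hlt : q < t := lt_of_le_of_ne hqt htq.symm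
    have := hf.slope_mono hqs ⟨hr, hrq⟩ ⟨ht, htq⟩ (hrq'.trans hlt.le)
    nlinarith

theorem le_Gamma_of_secant {q r t A B : ℝ} (hr : 0 < r) (ht : 0 < t) (hq : q ∈ uIcc t r)
    (hrq : r ≠ q) (hA : A ≤ Gamma q) (hB : Gamma r ≤ B) :
    A + (t - q) * ((B - A) / (r - q)) ≤ Gamma t := by
  have hcoef : (t - q) / (r - q) ≤ 0 := by
    rcases mem_uIcc.1 hq with ⟨h1, h2⟩ | ⟨h1, h2⟩
    · exact div_nonpos_of_nonpos_of_nonneg (by linarith) (by linarith)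
    · exact div_nonpos_of_nonneg_of_nonpos (by linarith) (by linarith)
  have key := convexOn_Gamma.add_mul_slope_le hr ht hq hrq
  rw [slope_def_field] at key
  have e : ∀ a b : ℝ, a + (t - q) * ((b - a) / (r - q)) =
      a * (1 - (t - q) / (r - q)) + b * ((t - q) / (r - q)) := by
    intro a b; field_simp [sub_ne_zero.2 hrq]; ring
  rw [e] at key ⊢
  nlinarith

theorem mul_gamma_ge (x : ℝ) (hx : 0 < x) : 0.885 ≤ x * Real.Gamma x := by
  rw [← Gamma_add_one hx.ne', add_comm]
  have ht : 0 < 1 + x := by linarith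
  have l28 := Gamma_one_add_28_div_64_ge
  obtain ⟨l29, u29⟩ := Gamma_one_add_29_div_64_mem
  obtain ⟨l30, u30⟩ := Gamma_one_add_30_div_64_mem
  obtain ⟨l31, u31⟩ := Gamma_one_add_31_div_64_mem
  rcases le_or_gt x (28 / 64) with hx₁ | hx₁
  · linarith [le_Gamma_of_secant (by norm_num) ht
      (mem_uIcc.2 (Or.inl ⟨by linarith, by norm_num⟩)) (by norm_num) l28 u29]
  rcases le_or_gt x (29 / 64) with hx₂ | hx₂
  · linarith [le_Gamma_of_secant (by norm_num) ht
      (mem_uIcc.2 (Or.inl ⟨by linarith, by norm_num⟩)) (by norm_num) l29 u30]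
  rcases le_or_gt x (30 / 64) with hx₃ | hx₃
  · linarith [le_Gamma_of_secant (by norm_num) ht
      (mem_uIcc.2 (Or.inl ⟨by linarith, by norm_num⟩)) (by norm_num) l30 u31]
  rcases le_or_gt x (31 / 64) with hx₄ | hx₄
  · linarith [le_Gamma_of_secant (by norm_num) ht
      (mem_uIcc.2 (Or.inr ⟨by norm_num, by linarith⟩)) (by norm_num) l30 u29]
  · linarith [le_Gamma_of_secant (by norm_num) ht
      (mem_uIcc.2 (Or.inr ⟨by norm_num, by linarith⟩)) (by norm_num) l31 u30]
end

section
/- Fix $t > 0$. There exists a finite constant $C_1$ (depending only on $t$) such that for all $x, y > 0$: if $x \leq y \log(3 + 1/y)^t$ then $x / \log(3 + 1/x)^t \leq C_1 y$. -/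
/-!
Write `L z = log (3 + 1 / z) ≥ 1`. The hypothesis says `1 / x ≥ u / log (3 + u) ^ t` with
`u = 1 / y`, so it suffices that `log (3 + u / log (3 + u) ^ t)` is at least a fixed multiple of
`log (3 + u)`. This holds because `log (3 + u) ^ t` grows more slowly than `√(3 + u)`, so dividing
`u` by it costs at most a square root, i.e. a factor `2` after taking logarithms.
-/

open Real

lemma one_lt_log_three_add {w : ℝ} (hw : 0 ≤ w) : 1 < log (3 + w) := by
  rw [lt_log_iff_exp_lt (by positivity)]
  linarith [exp_one_lt_three]

lemma log_rpow_le_mul_rpow {s t ε : ℝ} (hs : 1 ≤ s) (ht : 0 < t) (hε : 0 < ε) :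
    log s ^ t ≤ (t / ε) ^ t * s ^ ε := by
  have hlog : log s ≤ t / ε * s ^ (ε / t) :=
    (log_le_rpow_div (by positivity) (div_pos hε ht)).trans_eq (by rw [div_div_eq_mul_div]; ring)
  calc log s ^ t ≤ (t / ε * s ^ (ε / t)) ^ t := rpow_le_rpow (log_nonneg hs) hlog ht.le
    _ = (t / ε) ^ t * s ^ ε := by
      rw [mul_rpow (by positivity) (by positivity), ← rpow_mul (by positivity),
        div_mul_cancel₀ ε ht.ne']

lemma exists_log_three_add_le_mul_log_three_add_div {t : ℝ} (ht : 0 < t) :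
    ∃ C, 0 ≤ C ∧ ∀ u, 0 ≤ u → log (3 + u) ≤ C * log (3 + u / log (3 + u) ^ t) := by
  set K := max 1 ((t / (1 / 2)) ^ t)
  have hK : 1 ≤ K := le_max_left _ _
  refine ⟨2 * (1 + log K), by linarith [log_nonneg hK], fun u hu => ?_⟩
  set s := 3 + u
  set ℓ := log s ^ t
  have hℓ : 1 ≤ ℓ := one_le_rpow (one_lt_log_three_add hu).le ht.le
  have hℓK : ℓ ≤ K * √s := by
    calc ℓ ≤ (t / (1 / 2)) ^ t * s ^ (1 / 2 : ℝ) :=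
          log_rpow_le_mul_rpow (by linarith) ht one_half_pos
      _ ≤ K * √s := by rw [sqrt_eq_rpow]; gcongr; exact le_max_right _ _
  have hsqrt : √s ≤ K * (3 + u / ℓ) := by
    refine le_of_mul_le_mul_right ?_ (by positivity : 0 < ℓ)
    calc √s * ℓ ≤ √s * (K * √s) := by gcongr
      _ = K * s := by rw [mul_left_comm, mul_self_sqrt (by positivity)]
      _ ≤ K * (3 * ℓ + u) := by gcongr; linarith
      _ = K * (3 + u / ℓ) * ℓ := by field_simp
  have hlog : log s / 2 ≤ log K + log (3 + u / ℓ) := by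
    rw [← log_sqrt (by positivity), ← log_mul (by positivity) (by positivity)]
    exact log_le_log (by positivity) hsqrt
  nlinarith [one_lt_log_three_add (by positivity : 0 ≤ u / ℓ), log_nonneg hK]

theorem log_inverse_first (t : ℝ) (ht : 0 < t) :
    ∃ C₁ : ℝ, ∀ x y : ℝ, 0 < x → 0 < y →
      x ≤ y * Real.log (3 + 1 / y) ^ t →
      x / Real.log (3 + 1 / x) ^ t ≤ C₁ * y := by
  obtain ⟨C, hC, hlog⟩ := exists_log_three_add_le_mul_log_three_add_div ht
  refine ⟨C ^ t, fun x y hx hy hxy => ?_⟩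
  have hLx : 1 < log (3 + 1 / x) := one_lt_log_three_add (by positivity)
  have hLy : 1 < log (3 + 1 / y) := one_lt_log_three_add (by positivity)
  have hinv : 1 / y / log (3 + 1 / y) ^ t ≤ 1 / x := by
    rw [div_div]
    exact one_div_le_one_div_of_le hx hxy
  have hcompare : log (3 + 1 / y) ≤ C * log (3 + 1 / x) :=
    (hlog (1 / y) (by positivity)).trans <| by gcongr
  have hcompare_pow : log (3 + 1 / y) ^ t ≤ C ^ t * log (3 + 1 / x) ^ t := by
    rw [← mul_rpow hC (by linarith)]
    exact rpow_le_rpow (by linarith) hcompare ht.le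
  rw [div_le_iff₀ (by positivity)]
  calc x ≤ y * log (3 + 1 / y) ^ t := hxy
    _ ≤ y * (C ^ t * log (3 + 1 / x) ^ t) := by gcongr
    _ = C ^ t * y * log (3 + 1 / x) ^ t := by ring
end

section
/- Let $\mu$ be a probability measure on $\mathbb{R}^d$ with finite $\gamma$-th absolute moment $M_\gamma(\mu) = \int \|x\|^\gamma\,d\mu(x)$ for some $\gamma \in (0,2)$. Then $\int_{X \sim \mu} \int_{\mathbb{R}^d} \frac{(\cos\langle \omega, X\rangle - 1)^2 + \sin^2\langle \omega, X\rangle}{\|\omega\|^{d+\gamma}}\,d\omega\,d\mu(X) \leq \frac{16 \pi^{d/2} M_\gamma(\mu)}{\Gamma(d/2)\,\gamma(2-\gamma)}$. -/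
/-!
Since `|⟪ω, x⟫| ≤ ‖ω‖ ‖x‖`, the numerator `|e^{i⟪ω, x⟫} - 1|² = 2 - 2 cos ⟪ω, x⟫` is at most
`4 min ((‖x‖ ‖ω‖)², 1)`, a radial function of `ω`. Integrating in polar coordinates turns the inner
integral into the sphere area `2 π^{d/2} / Γ(d/2)` times a one-dimensional integral, which splits at
`r = 1 / ‖x‖` into `∫₀^{1/‖x‖} ‖x‖² r^{1-γ} dr + ∫_{1/‖x‖}^∞ r^{-1-γ} dr = 2 ‖x‖^γ / (γ (2 - γ))`;
both pieces converge exactly because `0 < γ < 2`. Integrating the resulting bound `C ‖x‖^γ` against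
`μ` gives the claim.
-/

open MeasureTheory Real
open scoped RealInnerProductSpace ENNReal

open Set Metric Module

theorem cos_sub_one_sq_add_sin_sq_le (t : ℝ) :
    (cos t - 1) ^ 2 + sin t ^ 2 ≤ 4 * min (t ^ 2) 1 := by
  have h_eq : (cos t - 1) ^ 2 + sin t ^ 2 = 2 - 2 * cos t := by
    linear_combination sin_sq_add_cos_sq t
  have h_quad : 2 - 2 * cos t ≤ t ^ 2 := by linarith [one_sub_sq_div_two_le_cos (x := t)]
  have h_four : 2 - 2 * cos t ≤ 4 := by linarith [neg_one_le_cos t]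
  rcases le_total (t ^ 2) 1 with h | h
  · rw [h_eq, min_eq_left h]; linarith [sq_nonneg t]
  · rw [h_eq, min_eq_right h]; linarith

theorem lintegral_Ioc_rpow {c s : ℝ} (hc : 0 < c) (hs : -1 < s) :
    ∫⁻ r in Ioc 0 c, ENNReal.ofReal (r ^ s) = ENNReal.ofReal (c ^ (s + 1) / (s + 1)) := by
  rw [← ofReal_integral_eq_lintegral_ofReal (intervalIntegral.intervalIntegrable_rpow' hs).1
      (ae_restrict_of_forall_mem measurableSet_Ioc fun r hr => rpow_nonneg hr.1.le s),
    ← intervalIntegral.integral_of_le hc.le, integral_rpow (Or.inl hs),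
    zero_rpow (by linarith), sub_zero]

theorem lintegral_Ioi_rpow {c s : ℝ} (hc : 0 < c) (hs : s < -1) :
    ∫⁻ r in Ioi c, ENNReal.ofReal (r ^ s) = ENNReal.ofReal (-c ^ (s + 1) / (s + 1)) := by
  rw [← ofReal_integral_eq_lintegral_ofReal (integrableOn_Ioi_rpow_of_lt hs hc)
      (ae_restrict_of_forall_mem measurableSet_Ioi fun r hr => rpow_nonneg (hc.trans hr).le s),
    integral_Ioi_rpow_of_lt hs hc]

theorem lintegral_Ioi_min_sq_one_mul_rpow {a γ : ℝ} (ha : 0 ≤ a) (hγ0 : 0 < γ) (hγ2 : γ < 2) :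
    ∫⁻ r in Ioi 0, ENNReal.ofReal (min ((a * r) ^ 2) 1 * r ^ (-(1 + γ))) =
      ENNReal.ofReal (2 / (γ * (2 - γ)) * a ^ γ) := by
  have hγ2' : 0 < 2 - γ := by linarith
  rcases ha.eq_or_lt with rfl | ha
  · simp [zero_rpow hγ0.ne']
  set c := a⁻¹
  have hc : 0 < c := inv_pos.2 ha
  have h_low : ∫⁻ r in Ioc 0 c, ENNReal.ofReal (min ((a * r) ^ 2) 1 * r ^ (-(1 + γ))) =
      ENNReal.ofReal (a ^ γ / (2 - γ)) := by
    calc _ = ∫⁻ r in Ioc 0 c, ENNReal.ofReal (a ^ 2) * ENNReal.ofReal (r ^ (1 - γ)) := by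
          refine setLIntegral_congr_fun measurableSet_Ioc fun r hr => ?_
          have har : (a * r) ^ 2 ≤ 1 := by
            refine pow_le_one₀ (mul_pos ha hr.1).le ?_
            calc a * r ≤ a * c := by gcongr; exact hr.2
              _ = 1 := mul_inv_cancel₀ ha.ne'
          rw [min_eq_left har, ← ENNReal.ofReal_mul (sq_nonneg a), mul_pow, mul_assoc,
            ← rpow_natCast r 2, ← rpow_add hr.1]
          congr 3
          push_cast
          ring
      _ = _ := by
          rw [lintegral_const_mul' _ _ ENNReal.ofReal_ne_top, lintegral_Ioc_rpow hc (by linarith),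
            ← ENNReal.ofReal_mul (sq_nonneg a)]
          congr 1
          rw [show 1 - γ + 1 = 2 - γ by ring, inv_rpow ha.le, ← rpow_neg ha.le, mul_div_assoc',
            ← rpow_natCast, ← rpow_add ha]
          norm_num
  have h_high : ∫⁻ r in Ioi c, ENNReal.ofReal (min ((a * r) ^ 2) 1 * r ^ (-(1 + γ))) =
      ENNReal.ofReal (a ^ γ / γ) := by
    calc _ = ∫⁻ r in Ioi c, ENNReal.ofReal (r ^ (-(1 + γ))) := by
          refine setLIntegral_congr_fun measurableSet_Ioi fun r hr => ?_
          have har : 1 ≤ (a * r) ^ 2 := by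
            refine one_le_pow₀ ?_
            calc 1 = a * c := (mul_inv_cancel₀ ha.ne').symm
              _ ≤ a * r := by gcongr; exact hr.le
          rw [min_eq_right har, one_mul]
      _ = _ := by
          rw [lintegral_Ioi_rpow hc (by linarith), show -(1 + γ) + 1 = -γ by ring, inv_rpow ha.le,
            ← rpow_neg ha.le, neg_neg, neg_div, div_neg, neg_neg]
  rw [← Ioc_union_Ioi_eq_Ioi hc.le, lintegral_union measurableSet_Ioi (Ioc_disjoint_Ioi le_rfl),
    h_low, h_high, ← ENNReal.ofReal_add (by positivity) (by positivity)]
  congr 1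
  field_simp
  ring

theorem lintegral_fun_norm_addHaar {E : Type*} [NormedAddCommGroup E] [NormedSpace ℝ E]
    [FiniteDimensional ℝ E] [MeasurableSpace E] [BorelSpace E] [Nontrivial E]
    (μ : Measure E) [μ.IsAddHaarMeasure] {f : ℝ → ℝ≥0∞} (hf : Measurable f) :
    ∫⁻ x, f ‖x‖ ∂μ =
      μ.toSphere univ * ∫⁻ r in Ioi 0, ENNReal.ofReal (r ^ (finrank ℝ E - 1)) * f r := by
  have hf_snd : Measurable fun p : sphere (0 : E) 1 × Ioi (0 : ℝ) => f p.2 :=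
    hf.comp (measurable_subtype_coe.comp measurable_snd)
  calc ∫⁻ x, f ‖x‖ ∂μ = ∫⁻ x : ({0}ᶜ : Set E), f ‖x.1‖ ∂μ.comap (↑) := by
        rw [lintegral_subtype_comap (measurableSet_singleton 0).compl (fun x => f ‖x‖),
          restrict_compl_singleton]
    _ = ∫⁻ p : sphere (0 : E) 1 × Ioi (0 : ℝ), f p.2
          ∂μ.toSphere.prod (.volumeIoiPow (finrank ℝ E - 1)) := by
        simpa using μ.measurePreserving_homeomorphUnitSphereProd.lintegral_comp hf_snd
    _ = μ.toSphere univ * ∫⁻ r : Ioi (0 : ℝ), f r ∂.volumeIoiPow (finrank ℝ E - 1) := by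
        simp [lintegral_prod _ hf_snd.aemeasurable, lintegral_const, mul_comm]
    _ = _ := by
        rw [Measure.volumeIoiPow, lintegral_withDensity_eq_lintegral_mul _
            (f := fun r : Ioi (0 : ℝ) => ENNReal.ofReal (r.1 ^ (finrank ℝ E - 1))) (by fun_prop)
            (g := fun r : Ioi (0 : ℝ) => f r) (hf.comp measurable_subtype_coe),
          ← lintegral_subtype_comap measurableSet_Ioi
            (fun r => ENNReal.ofReal (r ^ (finrank ℝ E - 1)) * f r)]
        rfl

section InnerProductSpace

variable {E : Type*} [NormedAddCommGroup E] [InnerProductSpace ℝ E] [FiniteDimensional ℝ E]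
  [MeasurableSpace E] [BorelSpace E] [Nontrivial E]

theorem toSphere_volume_univ :
    (volume : Measure E).toSphere univ =
      ENNReal.ofReal (2 * π ^ ((finrank ℝ E : ℝ) / 2) / Gamma ((finrank ℝ E : ℝ) / 2)) := by
  have hn : (0 : ℝ) < finrank ℝ E := Nat.cast_pos.2 finrank_pos
  have h_sqrt : √π ^ finrank ℝ E = π ^ ((finrank ℝ E : ℝ) / 2) := by
    rw [sqrt_eq_rpow, ← rpow_natCast, ← rpow_mul pi_pos.le, one_div_mul_eq_div]
  rw [Measure.toSphere_apply_univ, InnerProductSpace.volume_ball, ENNReal.ofReal_one, one_pow,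
    one_mul, ← ENNReal.ofReal_natCast, ← ENNReal.ofReal_mul hn.le, h_sqrt,
    Gamma_add_one (by positivity)]
  congr 1
  field_simp

theorem lintegral_cos_sub_one_sq_add_sin_sq_div_le (μ : Measure E) [μ.IsAddHaarMeasure] (x : E)
    {γ : ℝ} (hγ0 : 0 < γ) (hγ2 : γ < 2) :
    ∫⁻ ω, ENNReal.ofReal
        (((cos ⟪ω, x⟫ - 1) ^ 2 + sin ⟪ω, x⟫ ^ 2) / ‖ω‖ ^ ((finrank ℝ E : ℝ) + γ)) ∂μ ≤
      μ.toSphere univ * ENNReal.ofReal (8 / (γ * (2 - γ)) * ‖x‖ ^ γ) := by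
  set n := finrank ℝ E
  let g : ℝ → ℝ≥0∞ := fun r => ENNReal.ofReal (4 * min ((‖x‖ * r) ^ 2) 1 / r ^ ((n : ℝ) + γ))
  have h_radial : ∀ r ∈ Ioi (0 : ℝ), ENNReal.ofReal (r ^ (n - 1)) * g r =
      4 * ENNReal.ofReal (min ((‖x‖ * r) ^ 2) 1 * r ^ (-(1 + γ))) := by
    intro r (hr : 0 < r)
    have hn : ((n - 1 : ℕ) : ℝ) = n - 1 := by rw [Nat.cast_sub finrank_pos, Nat.cast_one]
    rw [← ENNReal.ofReal_ofNat, ← ENNReal.ofReal_mul (by positivity),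
      ← ENNReal.ofReal_mul (by norm_num), ← rpow_natCast, hn, div_eq_mul_inv,
      ← rpow_neg hr.le]
    congr 1
    calc _ = 4 * min ((‖x‖ * r) ^ 2) 1 * (r ^ ((n : ℝ) - 1) * r ^ (-((n : ℝ) + γ))) := by ring
      _ = _ := by rw [← rpow_add hr]; ring_nf
  calc _ ≤ ∫⁻ ω, g ‖ω‖ ∂μ := by
        refine lintegral_mono fun ω => ENNReal.ofReal_le_ofReal ?_
        refine div_le_div_of_nonneg_right ?_ (rpow_nonneg (norm_nonneg ω) _)
        refine (cos_sub_one_sq_add_sin_sq_le _).trans ?_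
        gcongr 4 * min ?_ 1
        obtain ⟨h_lo, h_hi⟩ := abs_le.1 (abs_real_inner_le_norm ω x)
        rw [mul_comm]
        exact sq_le_sq' h_lo h_hi
    _ = μ.toSphere univ * ∫⁻ r in Ioi 0, ENNReal.ofReal (r ^ (n - 1)) * g r :=
        lintegral_fun_norm_addHaar μ (by fun_prop)
    _ = μ.toSphere univ *
          (4 * ∫⁻ r in Ioi 0, ENNReal.ofReal (min ((‖x‖ * r) ^ 2) 1 * r ^ (-(1 + γ)))) := by
        rw [setLIntegral_congr_fun measurableSet_Ioi h_radial, lintegral_const_mul' _ _ (by simp)]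
    _ = _ := by
        rw [lintegral_Ioi_min_sq_one_mul_rpow (norm_nonneg x) hγ0 hγ2, ← ENNReal.ofReal_ofNat,
          ← ENNReal.ofReal_mul (by norm_num)]
        ring_nf

end InnerProductSpace

theorem lintegral_char_bound_general (d : ℕ) (hd : 0 < d) (γ : ℝ) (hγ0 : 0 < γ) (hγ2 : γ < 2)
    (μ : Measure (EuclideanSpace ℝ (Fin d)))
    (hInt : Integrable (fun x => ‖x‖ ^ γ) μ) :
    ∫⁻ x, (∫⁻ ω,
        ENNReal.ofReal
          (((Real.cos ⟪ω, x⟫ - 1) ^ 2 + Real.sin ⟪ω, x⟫ ^ 2) / ‖ω‖ ^ ((d : ℝ) + γ))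
        ∂(volume : Measure (EuclideanSpace ℝ (Fin d)))) ∂μ ≤
      ENNReal.ofReal
        (16 * π ^ ((d : ℝ) / 2) * (∫ x, ‖x‖ ^ γ ∂μ) /
          (Real.Gamma ((d : ℝ) / 2) * (γ * (2 - γ)))) := by
  have : Nonempty (Fin d) := ⟨⟨0, hd⟩⟩
  have h_dim : finrank ℝ (EuclideanSpace ℝ (Fin d)) = d := finrank_euclideanSpace_fin
  have hγ2' : 0 < 2 - γ := by linarith
  calc _ ≤ ∫⁻ x, (volume : Measure (EuclideanSpace ℝ (Fin d))).toSphere univ *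
          ENNReal.ofReal (8 / (γ * (2 - γ)) * ‖x‖ ^ γ) ∂μ := lintegral_mono fun x => by
        simpa only [h_dim] using lintegral_cos_sub_one_sq_add_sin_sq_div_le volume x hγ0 hγ2
    _ = ENNReal.ofReal (2 * π ^ ((d : ℝ) / 2) / Gamma ((d : ℝ) / 2)) *
          ENNReal.ofReal (8 / (γ * (2 - γ)) * ∫ x, ‖x‖ ^ γ ∂μ) := by
        rw [toSphere_volume_univ, h_dim, lintegral_const_mul' _ _ ENNReal.ofReal_ne_top,
          ← integral_const_mul, ofReal_integral_eq_lintegral_ofReal (hInt.const_mul _)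
            (ae_of_all _ fun x => by positivity)]
    _ = _ := by
        have hΓ : 0 < Gamma ((d : ℝ) / 2) := Gamma_pos_of_pos (by positivity)
        rw [← ENNReal.ofReal_mul (by positivity)]
        congr 1
        field_simp
        ring

theorem lintegral_char_bound (d : ℕ) (hd : 0 < d) (γ : ℝ) (hγ0 : 0 < γ) (hγ2 : γ < 2)
    (μ : Measure (EuclideanSpace ℝ (Fin d))) [IsProbabilityMeasure μ]
    (hInt : Integrable (fun x => ‖x‖ ^ γ) μ) :
    ∫⁻ x, (∫⁻ ω,
        ENNReal.ofReal
          (((Real.cos ⟪ω, x⟫ - 1) ^ 2 + Real.sin ⟪ω, x⟫ ^ 2) / ‖ω‖ ^ ((d : ℝ) + γ))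
        ∂(volume : Measure (EuclideanSpace ℝ (Fin d)))) ∂μ ≤
      ENNReal.ofReal
        (16 * π ^ ((d : ℝ) / 2) * (∫ x, ‖x‖ ^ γ ∂μ) /
          (Real.Gamma ((d : ℝ) / 2) * (γ * (2 - γ)))) :=
  lintegral_char_bound_general d hd γ hγ0 hγ2 μ hInt
end

section
/- Fix $\gamma \in (1,2)$. For every $x > 0$, $\int_0^\infty \frac{\cos(\omega x) - 1}{\omega^{(1+\gamma)/2}}\,d\omega = x^{(\gamma-1)/2}\cos\left(\frac{\pi(\gamma-1)}{4}\right)\Gamma\left(\frac{1-\gamma}{2}\right)$, where the integral is absolutely convergent and $\Gamma\left(\frac{1-\gamma}{2}\right)$ denotes the analytically continued Gamma function (which is negative for $\frac{1-\gamma}{2} \in (-1/2, 0)$). -/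
open Real MeasureTheory Set Function

/-!
Writing `ω ^ (-s) = Γ(s)⁻¹ ∫₀^∞ t ^ (s - 1) e ^ (-ω t) dt` and applying Fubini turns
`∫₀^∞ (cos ω - 1) / ω ^ s dω` into `Γ(s)⁻¹ ∫₀^∞ t ^ (s - 1) L(t) dt`, where
`L(t) = t / (1 + t²) - 1 / t` is the Laplace transform of `cos - 1`. The substitution `v = t²`
reduces what is left to `∫₀^∞ v ^ (m - 1) / (1 + v) dv = Γ(m) Γ(1 - m)`, which is the same Fubini
argument applied to `e ^ (-u)`, and the reflection formula turns the result into
`cos (π (1 - s) / 2) Γ(1 - s)`. With `s = (1 + γ) / 2`, the factor `x ^ (s - 1)` comes from the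
substitution `ω ↦ ω x`.
-/

theorem abs_cos_sub_one_le_sq_div_two (y : ℝ) : |cos y - 1| ≤ y ^ 2 / 2 := by
  rw [abs_sub_comm, abs_of_nonneg (sub_nonneg.2 (cos_le_one y))]
  linarith [one_sub_sq_div_two_le_cos (x := y)]

theorem abs_cos_sub_one_le_two (y : ℝ) : |cos y - 1| ≤ 2 := by
  rw [abs_le]
  constructor <;> linarith [cos_le_one y, neg_one_le_cos y]

theorem integrableOn_cos_mul_sub_one_div_rpow {s : ℝ} (hs1 : 1 < s) (hs3 : s < 3) (x : ℝ) :
    IntegrableOn (fun ω => (cos (ω * x) - 1) / ω ^ s) (Ioi 0) := by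
  have hmeas : AEStronglyMeasurable (fun ω : ℝ => (cos (ω * x) - 1) / ω ^ s) :=
    (by fun_prop : Measurable fun ω : ℝ => (cos (ω * x) - 1) / ω ^ s).aestronglyMeasurable
  rw [← Ioc_union_Ioi_eq_Ioi zero_le_one, integrableOn_union]
  constructor
  · have hdom : IntegrableOn (fun ω : ℝ => x ^ 2 / 2 * ω ^ (2 - s)) (Ioc 0 1) := by
      have h := intervalIntegral.intervalIntegrable_rpow' (a := 0) (b := 1) (r := 2 - s)
        (by linarith)
      rw [intervalIntegrable_iff_integrableOn_Ioc_of_le zero_le_one] at h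
      exact h.const_mul _
    refine hdom.mono' hmeas.restrict ?_
    filter_upwards [ae_restrict_mem measurableSet_Ioc] with ω hω
    replace hω : 0 < ω := hω.1
    rw [norm_div, Real.norm_eq_abs, Real.norm_of_nonneg (rpow_nonneg hω.le s),
      div_le_iff₀ (rpow_pos_of_pos hω s), mul_assoc, ← rpow_add hω, sub_add_cancel, rpow_two]
    linarith [abs_cos_sub_one_le_sq_div_two (ω * x)]
  · have hdom : IntegrableOn (fun ω : ℝ => 2 * ω ^ (-s)) (Ioi 1) :=
      (integrableOn_Ioi_rpow_of_lt (by linarith) zero_lt_one).const_mul 2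
    refine hdom.mono' hmeas.restrict ?_
    filter_upwards [ae_restrict_mem measurableSet_Ioi] with ω hω
    have hω0 : (0 : ℝ) < ω := zero_lt_one.trans hω
    rw [norm_div, Real.norm_eq_abs, Real.norm_of_nonneg (rpow_nonneg hω0.le s), rpow_neg hω0.le,
      ← div_eq_mul_inv]
    exact div_le_div_of_nonneg_right (abs_cos_sub_one_le_two _) (rpow_nonneg hω0.le s)

theorem integral_comp_mul_right_div_rpow (f : ℝ → ℝ) (s : ℝ) {x : ℝ} (hx : 0 < x) :
    ∫ ω in Ioi 0, f (ω * x) / ω ^ s = x ^ (s - 1) * ∫ u in Ioi 0, f u / u ^ s := by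
  have h : ∀ ω ∈ Ioi (0 : ℝ), f (ω * x) / ω ^ s = x ^ s * (f (ω * x) / (ω * x) ^ s) := by
    intro ω (hω : 0 < ω)
    rw [mul_rpow hω.le hx.le]
    field_simp [(rpow_pos_of_pos hx s).ne']
  rw [setIntegral_congr_fun measurableSet_Ioi h, integral_const_mul,
    integral_comp_mul_right_Ioi (fun u => f u / u ^ s) 0 hx, zero_mul, smul_eq_mul, ← mul_assoc,
    rpow_sub_one hx.ne', div_eq_mul_inv]

theorem integral_div_rpow_eq_integral_rpow_mul_laplace {f : ℝ → ℝ} {s : ℝ} (hs : 0 < s)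
    (hf : Measurable f) (hfs : IntegrableOn (fun ω => f ω / ω ^ s) (Ioi 0)) :
    ∫ ω in Ioi 0, f ω / ω ^ s =
      (Gamma s)⁻¹ * ∫ t in Ioi 0, t ^ (s - 1) * ∫ ω in Ioi 0, f ω * exp (-(t * ω)) := by
  set μ := volume.restrict (Ioi (0 : ℝ))
  set F : ℝ → ℝ → ℝ := fun ω t => f ω * (t ^ (s - 1) * exp (-(ω * t)))
  have hGamma (ω : ℝ) (hω : 0 < ω) : ∫ t, t ^ (s - 1) * exp (-(ω * t)) ∂μ = Gamma s / ω ^ s := by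
    rw [integral_rpow_mul_exp_neg_mul_Ioi hs hω, one_div, inv_rpow hω.le, inv_mul_eq_div]
  have hinner (ω : ℝ) (hω : 0 < ω) : ∫ t, F ω t ∂μ = Gamma s * (f ω / ω ^ s) := by
    rw [integral_const_mul, hGamma ω hω]
    ring
  have hF : Integrable (uncurry F) (μ.prod μ) := by
    refine (integrable_prod_iff ?_).2 ⟨?_, ?_⟩
    · exact (by fun_prop : Measurable (uncurry F)).aestronglyMeasurable
    · filter_upwards [ae_restrict_mem measurableSet_Ioi] with ω hω
      have h : IntegrableOn (fun t => t ^ (s - 1) * exp (-(ω * t))) (Ioi 0) := by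
        simpa only [rpow_one, neg_mul] using
          integrableOn_rpow_mul_exp_neg_mul_rpow (by linarith) zero_lt_one (mem_Ioi.1 hω)
      exact h.const_mul (f ω)
    · refine (hfs.norm.const_mul (Gamma s)).congr ?_
      filter_upwards [ae_restrict_mem measurableSet_Ioi] with ω hω
      have hnorm : ∀ᵐ t ∂μ, ‖F ω t‖ = ‖f ω‖ * (t ^ (s - 1) * exp (-(ω * t))) := by
        filter_upwards [ae_restrict_mem measurableSet_Ioi] with t ht
        rw [norm_mul, Real.norm_of_nonneg (mul_nonneg (rpow_nonneg (le_of_lt ht) _) (exp_pos _).le)]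
      rw [uncurry_def, integral_congr_ae hnorm, integral_const_mul, hGamma ω hω, norm_div,
        Real.norm_of_nonneg (rpow_nonneg (le_of_lt hω) s)]
      ring
  calc ∫ ω in Ioi 0, f ω / ω ^ s = ∫ ω, (Gamma s)⁻¹ * ∫ t, F ω t ∂μ ∂μ := by
        refine setIntegral_congr_fun measurableSet_Ioi fun ω hω => ?_
        rw [hinner ω hω, inv_mul_cancel_left₀ (Gamma_pos_of_pos hs).ne']
    _ = (Gamma s)⁻¹ * ∫ t, ∫ ω, F ω t ∂μ ∂μ := by
        rw [integral_const_mul, integral_integral_swap hF]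
    _ = _ := by
        congr 1
        refine integral_congr_ae (ae_of_all _ fun t => ?_)
        simp only [F, ← integral_const_mul]
        congr 1 with ω
        rw [mul_comm ω t]
        ring

theorem integral_cos_mul_exp_neg_mul {t : ℝ} (ht : 0 < t) :
    ∫ ω in Ioi 0, cos ω * exp (-(t * ω)) = t / (1 + t ^ 2) := by
  have hre : (-t + Complex.I).re < 0 := by simpa using ht
  have h (ω : ℝ) : cos ω * exp (-(t * ω)) = (Complex.exp ((-t + Complex.I) * ω)).re := by
    simp [Complex.exp_re, mul_comm]
  simp_rw [h]
  have hint := integral_re (integrableOn_exp_mul_complex_Ioi hre 0)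
  simp only [RCLike.re_to_complex] at hint
  rw [hint, integral_exp_mul_complex_Ioi hre]
  simp [Complex.div_re, Complex.normSq_apply, add_comm, sq]

theorem integral_exp_neg_mul {t : ℝ} (ht : 0 < t) :
    ∫ ω in Ioi 0, exp (-(t * ω)) = 1 / t := by
  simpa only [one_div, neg_mul, mul_zero, exp_zero, neg_div_neg_eq] using
    integral_exp_mul_Ioi (neg_neg_of_pos ht) 0

theorem integral_cos_sub_one_mul_exp_neg_mul {t : ℝ} (ht : 0 < t) :
    ∫ ω in Ioi 0, (cos ω - 1) * exp (-(t * ω)) = t / (1 + t ^ 2) - 1 / t := by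
  have hexp : IntegrableOn (fun ω => exp (-(t * ω))) (Ioi 0) := by
    simpa only [neg_mul] using integrableOn_exp_mul_Ioi (neg_neg_of_pos ht) 0
  have hcos : IntegrableOn (fun ω => cos ω * exp (-(t * ω))) (Ioi 0) :=
    hexp.bdd_mul (by fun_prop) (ae_of_all _ abs_cos_le_one)
  simp_rw [sub_mul, one_mul]
  rw [integral_sub hcos hexp, integral_cos_mul_exp_neg_mul ht, integral_exp_neg_mul ht]

theorem integral_rpow_div_one_add {m : ℝ} (hm0 : 0 < m) (hm1 : m < 1) :
    ∫ v in Ioi 0, v ^ (m - 1) / (1 + v) = π / sin (π * m) := by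
  have hGamma_integrand : ∀ u ∈ Ioi (0 : ℝ), exp (-u) * u ^ (1 - m - 1) = exp (-u) / u ^ m := by
    intro u (hu : 0 < u)
    rw [sub_sub_cancel_left, rpow_neg hu.le, div_eq_mul_inv]
  have hGamma : ∫ u in Ioi 0, exp (-u) / u ^ m = Gamma (1 - m) := by
    rw [Gamma_eq_integral (by linarith), setIntegral_congr_fun measurableSet_Ioi hGamma_integrand]
  have hint : IntegrableOn (fun u => exp (-u) / u ^ m) (Ioi 0) :=
    (GammaIntegral_convergent (sub_pos.2 hm1)).congr_fun hGamma_integrand measurableSet_Ioi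
  have hlaplace : ∀ t ∈ Ioi (0 : ℝ),
      t ^ (m - 1) * ∫ u in Ioi 0, exp (-u) * exp (-(t * u)) = t ^ (m - 1) / (1 + t) := by
    intro t (ht : 0 < t)
    simp_rw [← exp_add, ← neg_add, ← one_add_mul]
    rw [integral_exp_neg_mul (by linarith), mul_one_div]
  have h := integral_div_rpow_eq_integral_rpow_mul_laplace hm0 (by fun_prop) hint
  rw [hGamma, setIntegral_congr_fun measurableSet_Ioi hlaplace,
    eq_inv_mul_iff_mul_eq₀ (Gamma_pos_of_pos hm0).ne'] at h
  rw [← h, Gamma_mul_Gamma_one_sub]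

theorem integral_rpow_div_one_add_sq {a : ℝ} (ha0 : 0 < a) (ha2 : a < 2) :
    ∫ t in Ioi 0, t ^ (a - 1) / (1 + t ^ 2) = π / (2 * sin (π * (a / 2))) := by
  have h := integral_comp_rpow_Ioi_of_pos (g := fun v : ℝ => v ^ (a / 2 - 1) / (1 + v)) two_pos
  rw [integral_rpow_div_one_add (by linarith) (by linarith)] at h
  have hsubst : ∀ t ∈ Ioi (0 : ℝ), ((2 : ℝ) * t ^ ((2 : ℝ) - 1)) • ((t ^ (2 : ℝ)) ^ (a / 2 - 1) /
      (1 + t ^ (2 : ℝ))) = 2 * (t ^ (a - 1) / (1 + t ^ 2)) := by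
    intro t (ht : 0 < t)
    rw [smul_eq_mul, show (2 : ℝ) - 1 = 1 by norm_num, rpow_one, ← rpow_mul ht.le,
      show 2 * (a / 2 - 1) = a - 1 - 1 by ring, rpow_sub_one ht.ne', rpow_two]
    field_simp [ht.ne']
  rw [setIntegral_congr_fun measurableSet_Ioi hsubst, integral_const_mul] at h
  rw [mul_comm 2 (sin _), ← div_div, ← h]
  ring

theorem integral_cos_sub_one_div_rpow {s : ℝ} (hs1 : 1 < s) (hs2 : s < 2) :
    ∫ ω in Ioi 0, (cos ω - 1) / ω ^ s = cos (π * (1 - s) / 2) * Gamma (1 - s) := by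
  have hint : IntegrableOn (fun ω => (cos ω - 1) / ω ^ s) (Ioi 0) := by
    simpa only [mul_one] using integrableOn_cos_mul_sub_one_div_rpow hs1 (by linarith) 1
  have hlaplace : ∀ t ∈ Ioi (0 : ℝ), t ^ (s - 1) * ∫ ω in Ioi 0, (cos ω - 1) * exp (-(t * ω)) =
      -(t ^ (s - 1 - 1) / (1 + t ^ 2)) := by
    intro t (ht : 0 < t)
    rw [integral_cos_sub_one_mul_exp_neg_mul ht, rpow_sub_one ht.ne' (s - 1)]
    field_simp
    ring
  rw [integral_div_rpow_eq_integral_rpow_mul_laplace (by linarith) (by fun_prop) hint,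
    setIntegral_congr_fun measurableSet_Ioi hlaplace, integral_neg,
    integral_rpow_div_one_add_sq (by linarith) (by linarith)]
  have hΓ : 0 < Gamma s := Gamma_pos_of_pos (by linarith)
  have hsin : 0 < sin (π * s / 2) := sin_pos_of_pos_of_lt_pi (by positivity) (by nlinarith [pi_pos])
  have hcos : cos (π * s / 2) < 0 :=
    cos_neg_of_pi_div_two_lt_of_lt (by nlinarith [pi_pos]) (by nlinarith [pi_pos])
  have hΓ_one_sub : Gamma (1 - s) = π / (2 * sin (π * s / 2) * cos (π * s / 2)) / Gamma s := by
    rw [← sin_two_mul, show 2 * (π * s / 2) = π * s by ring, ← Gamma_mul_Gamma_one_sub]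
    field_simp
  rw [hΓ_one_sub, show π * ((s - 1) / 2) = π * s / 2 - π / 2 by ring, sin_sub_pi_div_two,
    show π * (1 - s) / 2 = π / 2 - π * s / 2 by ring, cos_pi_div_two_sub]
  field_simp

theorem cos_sub_one_integral (γ : ℝ) (hγ1 : 1 < γ) (hγ2 : γ < 2) (x : ℝ) (hx : 0 < x) :
    IntegrableOn (fun ω : ℝ => (Real.cos (ω * x) - 1) / ω ^ ((1 + γ) / 2)) (Ioi 0) ∧
    ∫ ω in Ioi (0 : ℝ), (Real.cos (ω * x) - 1) / ω ^ ((1 + γ) / 2) =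
      x ^ ((γ - 1) / 2) * Real.cos (π * (γ - 1) / 4) * Real.Gamma ((1 - γ) / 2) := by
  refine ⟨integrableOn_cos_mul_sub_one_div_rpow (by linarith) (by linarith) x, ?_⟩
  rw [integral_comp_mul_right_div_rpow (fun u => cos u - 1) _ hx,
    integral_cos_sub_one_div_rpow (by linarith) (by linarith),
    show π * (1 - (1 + γ) / 2) / 2 = -(π * (γ - 1) / 4) by ring, cos_neg,
    show (1 + γ) / 2 - 1 = (γ - 1) / 2 by ring, show 1 - (1 + γ) / 2 = (1 - γ) / 2 by ring]
  ring
end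

section
/- Let $f : \mathbb{R}^d \to \mathbb{R}$ be integrable with $\int f = 0$, $\int |f| = 2\epsilon$, and $\mathrm{supp}(f) \subseteq \mathbb{B}(0,1)$. Let $0 < d - s < d$ with $s > d/2$ (e.g. $s = (d+\gamma)/2$, $\gamma \in (0, \min\{d,2\})$), and let $I_s f(x) = \frac{1}{c_s}\int \frac{f(y)}{\|x-y\|^{d-s}}\,dy$ with $c_s = \pi^{d/2}2^s\Gamma(s/2)/\Gamma((d-s)/2)$. Then for all $\|x\| > 2$, $|I_s f(x)| \leq \frac{\epsilon}{c_s}\cdot\frac{2(d-s)}{(\|x\|-1)^{d-s+1}}$. -/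
/-!
Since `∫ f = 0`, the integral of `f` against the kernel `y ↦ ‖x - y‖ ^ (-(d - s))` does not change
when the kernel is shifted by a constant. On the unit ball the kernel takes values between
`(‖x‖ + 1) ^ (-(d - s))` and `(‖x‖ - 1) ^ (-(d - s))`, so shifting by the midpoint gives the bound
`ε` times the oscillation of the kernel, and convexity of `u ↦ u ^ (-(d - s))` bounds that
oscillation by its slope at `‖x‖ - 1` times `2`.
-/

open MeasureTheory Real Set

lemma abs_integral_mul_le_of_integral_eq_zero {X : Type*} [MeasurableSpace X] {μ : Measure X}
    {f g : X → ℝ} {a b : ℝ} (hf : Integrable f μ) (hg : AEStronglyMeasurable g μ)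
    (hf₀ : ∫ y, f y ∂μ = 0) (hg_mem : ∀ y, f y ≠ 0 → g y ∈ Icc a b) :
    |∫ y, f y * g y ∂μ| ≤ (b - a) / 2 * ∫ y, |f y| ∂μ := by
  set m := (a + b) / 2 with hm
  have h_osc : ∀ y, |f y * (g y - m)| ≤ (b - a) / 2 * |f y| := fun y => by
    by_cases hy : f y = 0
    · simp [hy]
    · obtain ⟨hay, hyb⟩ := hg_mem y hy
      rw [abs_mul, mul_comm]
      exact mul_le_mul_of_nonneg_right (abs_le.2 ⟨by linarith, by linarith⟩) (abs_nonneg _)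
  have h_int : Integrable (fun y => f y * (g y - m)) μ :=
    (hf.abs.const_mul _).mono' (hf.aestronglyMeasurable.mul (hg.sub aestronglyMeasurable_const))
      (.of_forall h_osc)
  have h_shift : ∫ y, f y * g y ∂μ = ∫ y, f y * (g y - m) ∂μ := by
    have h_split : ∀ y, f y * g y = f y * (g y - m) + f y * m := fun y => by ring
    simp_rw [h_split]
    rw [integral_add h_int (hf.mul_const m), integral_mul_const, hf₀, zero_mul, add_zero]
  calc |∫ y, f y * g y ∂μ| = |∫ y, f y * (g y - m) ∂μ| := by rw [h_shift]
    _ ≤ ∫ y, |f y * (g y - m)| ∂μ := abs_integral_le_integral_abs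
    _ ≤ ∫ y, (b - a) / 2 * |f y| ∂μ := integral_mono h_int.abs (hf.abs.const_mul _) h_osc
    _ = (b - a) / 2 * ∫ y, |f y| ∂μ := integral_const_mul _ _

lemma rpow_neg_norm_sub_mem_Icc {E : Type*} [SeminormedAddCommGroup E] {x y : E} {r α : ℝ}
    (hα : 0 ≤ α) (hy : ‖y‖ ≤ r) (hx : r < ‖x‖) :
    ‖x - y‖ ^ (-α) ∈ Icc ((‖x‖ + r) ^ (-α)) ((‖x‖ - r) ^ (-α)) := by
  have hlo : ‖x‖ - r ≤ ‖x - y‖ := by linarith [norm_sub_norm_le x y]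
  have hhi : ‖x - y‖ ≤ ‖x‖ + r := by linarith [norm_sub_le x y]
  exact ⟨rpow_le_rpow_of_nonpos (by linarith) hhi (by linarith),
    rpow_le_rpow_of_nonpos (by linarith) hlo (by linarith)⟩

lemma rpow_neg_sub_rpow_neg_le {u v α : ℝ} (hu : 0 < u) (huv : u ≤ v) (hα : 0 ≤ α) :
    u ^ (-α) - v ^ (-α) ≤ α * u ^ (-α - 1) * (v - u) := by
  have hpos : ∀ t ∈ Ici u, t ≠ 0 := fun t ht => (hu.trans_le ht).ne'
  have h_cont : ContinuousOn (fun t : ℝ => -t ^ (-α)) (Ici u) :=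
    (continuousOn_id.rpow_const fun t ht => .inl (hpos t ht)).neg
  have h_diff : DifferentiableOn ℝ (fun t : ℝ => -t ^ (-α)) (interior (Ici u)) := fun t ht =>
    ((differentiableAt_rpow_const_of_ne _
      (hpos t (interior_subset ht))).neg).differentiableWithinAt
  have h_deriv : ∀ t ∈ interior (Ici u), deriv (fun t : ℝ => -t ^ (-α)) t ≤ α * u ^ (-α - 1) := by
    intro t ht
    rw [interior_Ici, mem_Ioi] at ht
    rw [deriv.fun_neg, Real.deriv_rpow_const, neg_mul, neg_neg]
    exact mul_le_mul_of_nonneg_left (rpow_le_rpow_of_nonpos hu ht.le (by linarith)) hα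
  have h_mvt := (convex_Ici u).image_sub_le_mul_sub_of_deriv_le h_cont h_diff h_deriv u
    self_mem_Ici v huv huv
  linarith

lemma riesz_normalization_pos {d s : ℝ} (hs : 0 < s) (hsd : s < d) :
    0 < π ^ (d / 2) * 2 ^ s * Gamma (s / 2) / Gamma ((d - s) / 2) := by
  have := Gamma_pos_of_pos (half_pos hs)
  have := Gamma_pos_of_pos (half_pos (sub_pos.2 hsd))
  have := rpow_pos_of_pos pi_pos (d / 2)
  positivity

theorem riesz_tail_bound_general (d : ℕ) (s : ℝ)
    (hs_half : (d : ℝ) / 2 < s) (hs_d : s < d)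
    (f : EuclideanSpace ℝ (Fin d) → ℝ)
    (hf : Integrable f (volume : Measure (EuclideanSpace ℝ (Fin d))))
    (ε : ℝ)
    (hzero : ∫ y, f y = 0)
    (habs : ∫ y, |f y| = 2 * ε)
    (hsupp : Function.support f ⊆ Metric.closedBall 0 1) :
    ∀ x : EuclideanSpace ℝ (Fin d), 2 < ‖x‖ →
      |(π ^ ((d : ℝ) / 2) * 2 ^ s * Real.Gamma (s / 2) /
          Real.Gamma (((d : ℝ) - s) / 2))⁻¹ *
        ∫ y, f y / ‖x - y‖ ^ ((d : ℝ) - s)| ≤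
      ε / (π ^ ((d : ℝ) / 2) * 2 ^ s * Real.Gamma (s / 2) /
          Real.Gamma (((d : ℝ) - s) / 2)) *
        (2 * ((d : ℝ) - s) / (‖x‖ - 1) ^ ((d : ℝ) - s + 1)) := by
  intro x hx
  have hs : 0 < s := by linarith [(d.cast_nonneg : (0 : ℝ) ≤ d)]
  have hα : 0 ≤ (d : ℝ) - s := by linarith
  have hε : 0 ≤ ε := by
    have : 0 ≤ ∫ y, |f y| := integral_nonneg fun y => abs_nonneg (f y)
    linarith
  have hc := riesz_normalization_pos hs hs_d
  have h_integral : |∫ y, f y / ‖x - y‖ ^ ((d : ℝ) - s)| ≤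
      ε * (2 * ((d : ℝ) - s) / (‖x‖ - 1) ^ ((d : ℝ) - s + 1)) := calc
    _ = |∫ y, f y * ‖x - y‖ ^ (-((d : ℝ) - s))| := by
      simp_rw [rpow_neg (norm_nonneg _), div_eq_mul_inv]
    _ ≤ ((‖x‖ - 1) ^ (-((d : ℝ) - s)) - (‖x‖ + 1) ^ (-((d : ℝ) - s))) / 2 * ∫ y, |f y| :=
      abs_integral_mul_le_of_integral_eq_zero hf (by fun_prop : Measurable _).aestronglyMeasurable
        hzero fun y hy =>
          rpow_neg_norm_sub_mem_Icc hα (mem_closedBall_zero_iff.1 (hsupp hy)) (by linarith)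
    _ ≤ ((d : ℝ) - s) * (‖x‖ - 1) ^ (-((d : ℝ) - s) - 1) * 2 / 2 * (2 * ε) := by
      rw [habs]
      gcongr
      exact (rpow_neg_sub_rpow_neg_le (by linarith) (by linarith) hα).trans_eq (by ring)
    _ = _ := by
      rw [← neg_add', rpow_neg (by linarith)]
      ring
  rw [abs_mul, abs_inv, abs_of_pos hc]
  exact (mul_le_mul_of_nonneg_left h_integral (inv_nonneg.2 hc.le)).trans_eq (by ring)

theorem riesz_tail_bound (d : ℕ) (hd : 0 < d) (s : ℝ)
    (hs_half : (d : ℝ) / 2 < s) (hs_d : s < d)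
    (f : EuclideanSpace ℝ (Fin d) → ℝ)
    (hf : Integrable f (volume : Measure (EuclideanSpace ℝ (Fin d))))
    (ε : ℝ) (hε : 0 ≤ ε)
    (hzero : ∫ y, f y = 0)
    (habs : ∫ y, |f y| = 2 * ε)
    (hsupp : Function.support f ⊆ Metric.closedBall 0 1) :
    ∀ x : EuclideanSpace ℝ (Fin d), 2 < ‖x‖ →
      |(π ^ ((d : ℝ) / 2) * 2 ^ s * Real.Gamma (s / 2) /
          Real.Gamma (((d : ℝ) - s) / 2))⁻¹ *
        ∫ y, f y / ‖x - y‖ ^ ((d : ℝ) - s)| ≤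
      ε / (π ^ ((d : ℝ) / 2) * 2 ^ s * Real.Gamma (s / 2) /
          Real.Gamma (((d : ℝ) - s) / 2)) *
        (2 * ((d : ℝ) - s) / (‖x‖ - 1) ^ ((d : ℝ) - s + 1)) :=
  riesz_tail_bound_general d s hs_half hs_d f hf ε hzero habs hsupp
end
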